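/- arXiv:0711.0560 — 3 statements merged into one kernel-verified Lean document; each statement's English description precedes it below -/
import Mathlib

section
/- Abstract fixed point lemma with quadratic perturbation. Let X be a Banach space, 0 ≤ ε < 1, c > 0. Let T : X → X be linear with ‖Tx‖ ≤ ε‖x‖ for all x ∈ X, and let B : X × X → X be bilinear with ‖B(x₁,x₂)‖ ≤ c‖x₁‖‖x₂‖ for all x₁,x₂ ∈ X. Let y ∈ X with ‖y‖ < (1−ε)²/(4c), and let ξ₁ = ((1−ε) − √((1−ε)² − 4c‖y‖))/(2c) and ξ₂ = ((1−ε) + √((1−ε)² − 4c‖y‖))/(2c) be the two roots of ξ = ‖y‖ + εξ + cξ². Then the equation x + Tx + B(x,x) = y has a solution x̄ ∈ X with ‖x̄‖ ≤ ξ₁, and x̄ is the unique solution in the open ball {x ∈ X : ‖x‖ < ξ₂}. -/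
/-!
The map `x ↦ y - T x - B(x, x)` sends the closed ball of radius `ξ₁` into itself, because `ξ₁`
solves `ξ = ‖y‖ + εξ + cξ²`, and is Lipschitz there with constant
`ε + 2cξ₁ = 1 - √((1 - ε)² - 4c‖y‖) < 1`, so the Banach fixed point theorem produces a solution.
Two solutions `x, x'` satisfy `‖x - x'‖ ≤ (ε + c(‖x‖ + ‖x'‖)) ‖x - x'‖`, and the factor is `< 1`
when `‖x‖ ≤ ξ₁` and `‖x'‖ < ξ₂`, since `c(ξ₁ + ξ₂) = 1 - ε`.
-/

open Function Metric Set NNReal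

theorem exists_isFixedPt_of_lipschitzOnWith {α : Type*} [MetricSpace α] {f : α → α}
    {s : Set α} {K : ℝ≥0} (hsc : IsComplete s) (hs : s.Nonempty) (hsf : MapsTo f s s)
    (hf : LipschitzOnWith K f s) (hK : K < 1) :
    ∃ x ∈ s, IsFixedPt f x := by
  obtain ⟨x, hx⟩ := hs
  obtain ⟨z, hz, hfz, -⟩ :=
    ContractingWith.exists_fixedPoint' hsc hsf ⟨hK, hf.mapsToRestrict hsf⟩ hx (edist_ne_top _ _)
  exact ⟨z, hz, hfz⟩

section QuadraticPerturbation

variable {R X : Type*} [CommRing R] [NormedAddCommGroup X] [Module R X]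
  {ε c : ℝ} {T : X →ₗ[R] X} {B : X →ₗ[R] X →ₗ[R] X}

theorem linear_add_bilin_diag_sub (a b : X) :
    (T a + B a a) - (T b + B b b) = T (a - b) + B a (a - b) + B (a - b) b := by
  simp only [map_sub, LinearMap.sub_apply]
  abel

theorem norm_linear_add_bilin_diag_sub_le (hT : ∀ x, ‖T x‖ ≤ ε * ‖x‖)
    (hB : ∀ x₁ x₂, ‖B x₁ x₂‖ ≤ c * ‖x₁‖ * ‖x₂‖) (a b : X) :
    ‖(T a + B a a) - (T b + B b b)‖ ≤ (ε + c * (‖a‖ + ‖b‖)) * ‖a - b‖ := by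
  rw [linear_add_bilin_diag_sub]
  calc ‖T (a - b) + B a (a - b) + B (a - b) b‖
      ≤ ‖T (a - b)‖ + ‖B a (a - b)‖ + ‖B (a - b) b‖ := norm_add₃_le
    _ ≤ ε * ‖a - b‖ + c * ‖a‖ * ‖a - b‖ + c * ‖a - b‖ * ‖b‖ := by
      gcongr
      exacts [hT _, hB _ _, hB _ _]
    _ = (ε + c * (‖a‖ + ‖b‖)) * ‖a - b‖ := by ring

theorem eq_of_add_linear_add_bilin_diag_eq (hT : ∀ x, ‖T x‖ ≤ ε * ‖x‖)
    (hB : ∀ x₁ x₂, ‖B x₁ x₂‖ ≤ c * ‖x₁‖ * ‖x₂‖) {a b : X} (hab : ε + c * (‖b‖ + ‖a‖) < 1)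
    (h : a + T a + B a a = b + T b + B b b) : a = b := by
  have hdiff : a - b = (T b + B b b) - (T a + B a a) :=
    calc a - b = (a + T a + B a a) - (T a + B a a) - b := by abel
      _ = (T b + B b b) - (T a + B a a) := by rw [h]; abel
  have hle : ‖a - b‖ ≤ (ε + c * (‖b‖ + ‖a‖)) * ‖a - b‖ := by
    calc ‖a - b‖ = ‖(T b + B b b) - (T a + B a a)‖ := by rw [hdiff]
      _ ≤ (ε + c * (‖b‖ + ‖a‖)) * ‖b - a‖ := norm_linear_add_bilin_diag_sub_le hT hB b a
      _ = (ε + c * (‖b‖ + ‖a‖)) * ‖a - b‖ := by rw [norm_sub_rev]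
  have hzero : ‖a - b‖ ≤ 0 := by nlinarith [norm_nonneg (a - b)]
  exact sub_eq_zero.1 (norm_le_zero_iff.1 hzero)

theorem exists_add_linear_add_bilin_diag_eq [CompleteSpace X] (hε : 0 ≤ ε) (hc : 0 ≤ c)
    (hT : ∀ x, ‖T x‖ ≤ ε * ‖x‖) (hB : ∀ x₁ x₂, ‖B x₁ x₂‖ ≤ c * ‖x₁‖ * ‖x₂‖) (y : X)
    {r : ℝ} (hr : 0 ≤ r) (hself : ‖y‖ + ε * r + c * r ^ 2 ≤ r) (hcontr : ε + 2 * c * r < 1) :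
    ∃ x ∈ closedBall (0 : X) r, x + T x + B x x = y := by
  set f : X → X := fun x => y - (T x + B x x)
  have hnorm : ∀ x, ‖T x + B x x‖ ≤ (ε + c * ‖x‖) * ‖x‖ := fun x => by
    simpa using norm_linear_add_bilin_diag_sub_le hT hB x 0
  have hmaps : MapsTo f (closedBall 0 r) (closedBall 0 r) := by
    intro x hx
    rw [mem_closedBall_zero_iff] at hx ⊢
    calc ‖y - (T x + B x x)‖ ≤ ‖y‖ + (ε + c * ‖x‖) * ‖x‖ :=
          (norm_sub_le _ _).trans (by gcongr; exact hnorm x)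
      _ ≤ ‖y‖ + (ε + c * r) * r := by gcongr
      _ = ‖y‖ + ε * r + c * r ^ 2 := by ring
      _ ≤ r := hself
  have hlip : LipschitzOnWith ⟨ε + 2 * c * r, by positivity⟩ f (closedBall 0 r) := by
    refine lipschitzOnWith_iff_norm_sub_le.2 fun a ha b hb => ?_
    rw [mem_closedBall_zero_iff] at ha hb
    calc ‖f a - f b‖ = ‖(T b + B b b) - (T a + B a a)‖ := by simp only [f]; congr 1; abel
      _ ≤ (ε + c * (‖b‖ + ‖a‖)) * ‖b - a‖ := norm_linear_add_bilin_diag_sub_le hT hB b a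
      _ ≤ (ε + c * (r + r)) * ‖a - b‖ := by rw [norm_sub_rev]; gcongr
      _ = (ε + 2 * c * r) * ‖a - b‖ := by ring
  obtain ⟨x, hx, hfx⟩ := exists_isFixedPt_of_lipschitzOnWith isClosed_closedBall.isComplete
    (nonempty_closedBall.2 hr) hmaps hlip (by exact_mod_cast hcontr)
  exact ⟨x, hx, by rw [add_assoc]; exact eq_sub_iff_add_eq.1 hfx.symm⟩

end QuadraticPerturbation

theorem fixed_point_with_quadratic_perturbation
    {X : Type*} [NormedAddCommGroup X] [NormedSpace ℝ X] [CompleteSpace X]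
    (ε c : ℝ) (hε0 : 0 ≤ ε) (hε1 : ε < 1) (hc : 0 < c)
    (T : X →ₗ[ℝ] X) (hT : ∀ x : X, ‖T x‖ ≤ ε * ‖x‖)
    (B : X →ₗ[ℝ] X →ₗ[ℝ] X) (hB : ∀ x₁ x₂ : X, ‖B x₁ x₂‖ ≤ c * ‖x₁‖ * ‖x₂‖)
    (y : X) (hy : ‖y‖ < (1 - ε) ^ 2 / (4 * c)) :
    ∃ x : X, ‖x‖ ≤ ((1 - ε) - Real.sqrt ((1 - ε) ^ 2 - 4 * c * ‖y‖)) / (2 * c) ∧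
      x + T x + B x x = y ∧
      ∀ x' : X, ‖x'‖ < ((1 - ε) + Real.sqrt ((1 - ε) ^ 2 - 4 * c * ‖y‖)) / (2 * c) →
        x' + T x' + B x' x' = y → x' = x := by
  have hdisc : 0 < (1 - ε) ^ 2 - 4 * c * ‖y‖ := by
    rw [lt_div_iff₀ (by positivity)] at hy
    linarith
  set s := Real.sqrt ((1 - ε) ^ 2 - 4 * c * ‖y‖)
  have hs : 0 < s := Real.sqrt_pos.2 hdisc
  have hs_sq : s ^ 2 = (1 - ε) ^ 2 - 4 * c * ‖y‖ := Real.sq_sqrt hdisc.le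
  have hs_le : s ≤ 1 - ε := by nlinarith [norm_nonneg y]
  set ξ₁ := ((1 - ε) - s) / (2 * c)
  set ξ₂ := ((1 - ε) + s) / (2 * c)
  have hξ₁ : 0 ≤ ξ₁ := div_nonneg (by linarith) (by positivity)
  have hroot : ‖y‖ + ε * ξ₁ + c * ξ₁ ^ 2 = ξ₁ := by
    simp only [ξ₁]; field_simp; linear_combination hs_sq
  have hcξ₁ : 2 * c * ξ₁ = 1 - ε - s := by simp only [ξ₁]; field_simp
  have hcξ₂ : 2 * c * ξ₂ = 1 - ε + s := by simp only [ξ₂]; field_simp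
  obtain ⟨x, hx, hxy⟩ := exists_add_linear_add_bilin_diag_eq hε0 hc.le hT hB y hξ₁ hroot.le
    (by linarith)
  rw [mem_closedBall_zero_iff] at hx
  refine ⟨x, hx, hxy, fun x' hx' hx'y =>
    eq_of_add_linear_add_bilin_diag_eq hT hB ?_ (hx'y.trans hxy.symm)⟩
  linarith [mul_lt_mul_of_pos_left hx' hc, mul_le_mul_of_nonneg_left hx hc.le]
end

section
/- Properties of the function β. The function β(A) = 16π( A + (1/2)A² log((A−1)/(A+1)) + 4A/(3(A²−1)) ) is strictly monotonically decreasing on the interval (1,∞) and maps (1,∞) bijectively onto (0,∞); in particular β(A) > 0 for all A > 1, β(A) → +∞ as A → 1⁺, and β(A) → 0 as A → +∞, so β has an inverse function γ : (0,∞) → (1,∞). -/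
/-!
With `x = A⁻¹`, `log ((A + 1) / (A - 1)) = log (1 + x) - log (1 - x) = 2 ∑ x ^ (2k+1) / (2k+1)`,
which lies between `2x` and `2x + 2x³ / (3 (1 - x²))` (bound the tail by a geometric series).
Substituting into `β` traps `β A` between `16π A / (A² - 1)` and `4/3` of it, which gives
positivity and both limits. The lower bound `A · log ((A + 1) / (A - 1)) ≥ 2` also makes
`β' A = 16π (2 - A log ((A + 1) / (A - 1)) - (A² + 7) / (3 (A² - 1)²))` negative, so `β` is
strictly decreasing, and the intermediate value theorem gives surjectivity onto `(0, ∞)`.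
-/

open Real Filter

noncomputable section

def betaL (A : ℝ) : ℝ :=
  16 * π * (A + A ^ 2 / 2 * Real.log ((A - 1) / (A + 1)) + 4 * A / (3 * (A ^ 2 - 1)))

open Set Topology

theorem two_mul_le_log_sub_log {x : ℝ} (hx₀ : 0 ≤ x) (hx₁ : x < 1) :
    2 * x ≤ log (1 + x) - log (1 - x) := by
  have hs := hasSum_log_sub_log_of_abs_lt_one (abs_lt.2 ⟨by linarith, hx₁⟩)
  simpa using le_hasSum hs 0 fun _ _ => by positivity

theorem log_sub_log_le {x : ℝ} (hx₀ : 0 ≤ x) (hx₁ : x < 1) :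
    log (1 + x) - log (1 - x) ≤ 2 * x + 2 * x ^ 3 / (3 * (1 - x ^ 2)) := by
  have hs := (hasSum_nat_add_iff' 1).2
    (hasSum_log_sub_log_of_abs_lt_one (abs_lt.2 ⟨by linarith, hx₁⟩))
  have hgeom := (hasSum_geometric_of_lt_one (sq_nonneg x) (by nlinarith)).mul_left (2 * x ^ 3 / 3)
  have htail := hasSum_le (fun k => ?_) hs hgeom
  · norm_num at htail
    calc log (1 + x) - log (1 - x) ≤ 2 * x + 2 * x ^ 3 / 3 * (1 - x ^ 2)⁻¹ := by linarith
      _ = _ := by rw [mul_comm 3, ← div_div]; ring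
  · have hk : 1 / (2 * ((k : ℝ) + 1) + 1) ≤ 1 / 3 := by gcongr; linarith [k.cast_nonneg (α := ℝ)]
    have hpow : x ^ (2 * (k + 1) + 1) = x ^ 3 * (x ^ 2) ^ k := by ring
    rw [hpow]
    push_cast
    have hnonneg : 0 ≤ x ^ 3 * (x ^ 2) ^ k := by positivity
    nlinarith

theorem ContinuousOn.surjOn_Ioi_of_tendsto {α δ : Type*} [ConditionallyCompleteLinearOrder α]
    [TopologicalSpace α] [OrderTopology α] [DenselyOrdered α] [NoMaxOrder α]
    [LinearOrder δ] [TopologicalSpace δ] [OrderClosedTopology δ] {f : α → δ} {a : α} {l : δ}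
    (hf : ContinuousOn f (Ioi a)) (hleft : Tendsto f (𝓝[>] a) atTop)
    (htop : Tendsto f atTop (𝓝 l)) : SurjOn f (Ioi a) (Ioi l) := by
  intro t (ht : l < t)
  obtain ⟨b, hbt, hb⟩ := ((hleft.eventually_ge_atTop t).and self_mem_nhdsWithin).exists
  obtain ⟨c, hct, hc⟩ := ((htop.eventually_lt_const ht).and (eventually_gt_atTop a)).exists
  exact hf.surjOn_Icc hc hb ⟨hct.le, hbt⟩

theorem tendsto_div_sq_sub_one_atTop : Tendsto (fun A : ℝ => A / (A ^ 2 - 1)) atTop (𝓝 0) := by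
  have h : Tendsto (fun A : ℝ => A⁻¹ / (1 - A⁻¹ ^ 2)) atTop (𝓝 (0 / (1 - 0 ^ 2))) :=
    tendsto_inv_atTop_zero.div (tendsto_const_nhds.sub (tendsto_inv_atTop_zero.pow 2)) (by norm_num)
  rw [zero_div] at h
  refine h.congr' ?_
  filter_upwards [eventually_gt_atTop 0] with A hA
  field_simp

theorem tendsto_div_sq_sub_one_nhdsGT_one :
    Tendsto (fun A : ℝ => A / (A ^ 2 - 1)) (𝓝[>] 1) atTop := by
  have hcont : ContinuousWithinAt (fun A : ℝ => A ^ 2 - 1) (Ioi 1) 1 := by fun_prop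
  have hsq : Tendsto (fun A : ℝ => A ^ 2 - 1) (𝓝[>] 1) (𝓝[>] 0) := by
    simpa using hcont.tendsto_nhdsWithin (t := Ioi 0) fun A (hA : 1 < A) => by
      simp only [mem_Ioi]; nlinarith
  have hid : Tendsto (fun A : ℝ => A) (𝓝[>] 1) (𝓝 1) := tendsto_nhdsWithin_of_tendsto_nhds tendsto_id
  simpa only [div_eq_mul_inv, Function.comp_def] using
    hid.pos_mul_atTop one_pos (tendsto_inv_nhdsGT_zero.comp hsq)

theorem log_sub_one_div_add_one {A : ℝ} (hA : 1 < A) :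
    log ((A - 1) / (A + 1)) = -(log (1 + A⁻¹) - log (1 - A⁻¹)) := by
  have hquot : (A - 1) / (A + 1) = (1 - A⁻¹) / (1 + A⁻¹) := by field_simp
  have hinv : A⁻¹ < 1 := inv_lt_one_of_one_lt₀ hA
  rw [hquot, log_div (by linarith) (by positivity)]
  ring

theorem two_add_mul_log_div_nonpos {A : ℝ} (hA : 1 < A) : 2 + A * log ((A - 1) / (A + 1)) ≤ 0 := by
  have hL := two_mul_le_log_sub_log (inv_nonneg.2 (by linarith)) (inv_lt_one_of_one_lt₀ hA)
  have hscale : A * (2 * A⁻¹) = 2 := by field_simp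
  rw [log_sub_one_div_add_one hA]
  linarith [mul_le_mul_of_nonneg_left hL (by positivity : 0 ≤ A)]

theorem le_betaL {A : ℝ} (hA : 1 < A) : 16 * π * (A / (A ^ 2 - 1)) ≤ betaL A := by
  have hL := log_sub_log_le (inv_nonneg.2 (by linarith)) (inv_lt_one_of_one_lt₀ hA)
  have hscale : A ^ 2 / 2 * (2 * A⁻¹ + 2 * A⁻¹ ^ 3 / (3 * (1 - A⁻¹ ^ 2))) =
      A + A / (3 * (A ^ 2 - 1)) := by
    field_simp
  have hsplit : A / (A ^ 2 - 1) = 4 * A / (3 * (A ^ 2 - 1)) - A / (3 * (A ^ 2 - 1)) := by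
    field_simp; ring
  rw [betaL, log_sub_one_div_add_one hA]
  refine mul_le_mul_of_nonneg_left ?_ (by positivity)
  linarith [mul_le_mul_of_nonneg_left hL (by positivity : 0 ≤ A ^ 2 / 2)]

theorem betaL_le {A : ℝ} (hA : 1 < A) : betaL A ≤ 4 / 3 * (16 * π * (A / (A ^ 2 - 1))) := by
  have hL := two_mul_le_log_sub_log (inv_nonneg.2 (by linarith)) (inv_lt_one_of_one_lt₀ hA)
  have hscale : A ^ 2 / 2 * (2 * A⁻¹) = A := by field_simp
  rw [betaL, log_sub_one_div_add_one hA, mul_left_comm, mul_div_mul_comm]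
  refine mul_le_mul_of_nonneg_left ?_ (by positivity)
  linarith [mul_le_mul_of_nonneg_left hL (by positivity : 0 ≤ A ^ 2 / 2)]

theorem betaL_pos {A : ℝ} (hA : 1 < A) : 0 < betaL A := by
  have hsq : 0 < A ^ 2 - 1 := by nlinarith
  exact (by positivity : 0 < 16 * π * (A / (A ^ 2 - 1))).trans_le (le_betaL hA)

theorem tendsto_betaL_atTop : Tendsto betaL atTop (𝓝 0) := by
  have hlow := tendsto_div_sq_sub_one_atTop.const_mul (16 * π)
  rw [mul_zero] at hlow
  have hup := hlow.const_mul (4 / 3)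
  rw [mul_zero] at hup
  have hA : ∀ᶠ A : ℝ in atTop, 1 < A := eventually_gt_atTop 1
  exact tendsto_of_tendsto_of_tendsto_of_le_of_le' hlow hup (hA.mono fun _ => le_betaL)
    (hA.mono fun _ => betaL_le)

theorem tendsto_betaL_nhdsGT_one : Tendsto betaL (𝓝[>] 1) atTop :=
  tendsto_atTop_mono' _ (eventually_mem_nhdsWithin.mono fun _ => le_betaL)
    (tendsto_div_sq_sub_one_nhdsGT_one.const_mul_atTop (by positivity))

theorem hasDerivAt_betaL {A : ℝ} (hA : 1 < A) :
    HasDerivAt betaL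
      (16 * π * (2 + A * log ((A - 1) / (A + 1)) - (A ^ 2 + 7) / (3 * (A ^ 2 - 1) ^ 2))) A := by
  have hsub : A - 1 ≠ 0 := by linarith
  have hadd : A + 1 ≠ 0 := by linarith
  have hsq : A ^ 2 - 1 ≠ 0 := by nlinarith
  have hlog := (((hasDerivAt_id' A).sub_const 1).fun_div ((hasDerivAt_id' A).add_const 1) hadd).log
    (div_ne_zero hsub hadd)
  have hrat := ((hasDerivAt_id' A).const_mul 4).fun_div
    (((hasDerivAt_pow 2 A).sub_const 1).const_mul 3) (mul_ne_zero three_ne_zero hsq)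
  refine ((((hasDerivAt_id' A).add (((hasDerivAt_pow 2 A).div_const 2).mul hlog)).add
    hrat).const_mul (16 * π)).congr_deriv ?_
  field_simp
  ring

theorem continuousOn_betaL : ContinuousOn betaL (Ioi 1) :=
  fun _ hA => (hasDerivAt_betaL hA).continuousAt.continuousWithinAt

theorem betaL_strictAntiOn : StrictAntiOn betaL (Ioi 1) := by
  refine strictAntiOn_of_hasDerivWithinAt_neg (convex_Ioi 1) continuousOn_betaL
    (fun A hA => (hasDerivAt_betaL (by simpa using hA)).hasDerivWithinAt) fun A hA => ?_
  rw [interior_Ioi] at hA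
  have hsq : A ^ 2 - 1 ≠ 0 := by nlinarith [mem_Ioi.1 hA]
  have hrat : 0 < (A ^ 2 + 7) / (3 * (A ^ 2 - 1) ^ 2) := by positivity
  exact mul_neg_of_pos_of_neg (by positivity) (by linarith [two_add_mul_log_div_nonpos hA])

theorem betaL_strictAnti_bijective :
    StrictAntiOn betaL (Set.Ioi 1) ∧
    Set.BijOn betaL (Set.Ioi 1) (Set.Ioi 0) ∧
    (∀ A : ℝ, 1 < A → 0 < betaL A) ∧
    Tendsto betaL (nhdsWithin 1 (Set.Ioi 1)) atTop ∧
    Tendsto betaL atTop (nhds 0) ∧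
    ∃ γ : ℝ → ℝ, Set.BijOn γ (Set.Ioi 0) (Set.Ioi 1) ∧
      (∀ t ∈ Set.Ioi (0 : ℝ), betaL (γ t) = t) ∧
      (∀ A ∈ Set.Ioi (1 : ℝ), γ (betaL A) = A) := by
  have hbij : BijOn betaL (Ioi 1) (Ioi 0) :=
    ⟨fun _ => betaL_pos, betaL_strictAntiOn.injOn,
      continuousOn_betaL.surjOn_Ioi_of_tendsto tendsto_betaL_nhdsGT_one tendsto_betaL_atTop⟩
  have hinv := hbij.invOn_invFunOn
  exact ⟨betaL_strictAntiOn, hbij, fun _ => betaL_pos, tendsto_betaL_nhdsGT_one,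
    tendsto_betaL_atTop, _, BijOn.symm hinv.symm hbij, hinv.2, hinv.1⟩
end
end

section
/- Explicit slowly decaying solution of a modified drift equation. Let n ≥ 2 be an integer, let ε ∈ (0,1), and set c = ε(n−ε)/(1−ε). Then the scalar function u(x) = x₁ |x|^{ε−n} is smooth on ℝⁿ \ {0} and satisfies −Δu + c · div( (x/|x|²) u ) = 0 at every point of ℝⁿ \ {0}, where div( (x/|x|²) u ) = Σ_j ∂/∂x_j ( x_j u(x)/|x|² ). -/
open MeasureTheory Real Metric Filter

noncomputable section

namespace SDDSaux

variable {n : ℕ}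

lemma qpos {x : EuclideanSpace ℝ (Fin n)} (hx : x ≠ 0) : (0:ℝ) < ‖x‖ ^ 2 :=
  pow_pos (norm_pos_iff.mpr hx) 2

lemma hasFDerivAt_P (β : ℝ) {x : EuclideanSpace ℝ (Fin n)} (hx : x ≠ 0) :
    HasFDerivAt (fun y : EuclideanSpace ℝ (Fin n) => (‖y‖ ^ 2 : ℝ) ^ β)
      ((β * (‖x‖ ^ 2 : ℝ) ^ (β - 1)) • (2 • innerSL ℝ x)) x := by
  have h1 : HasFDerivAt (fun y : EuclideanSpace ℝ (Fin n) => (‖y‖ ^ 2 : ℝ))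
      (2 • innerSL ℝ x) x := (hasStrictFDerivAt_norm_sq x).hasFDerivAt
  have h2 := Real.hasDerivAt_rpow_const (x := ‖x‖ ^ 2) (p := β) (Or.inl (qpos hx).ne')
  exact h2.comp_hasFDerivAt x h1

lemma hasFDerivAt_XP (i : Fin n) (β : ℝ) {x : EuclideanSpace ℝ (Fin n)} (hx : x ≠ 0) :
    HasFDerivAt (fun y : EuclideanSpace ℝ (Fin n) => y i * (‖y‖ ^ 2 : ℝ) ^ β)
      ((x i) • ((β * (‖x‖ ^ 2 : ℝ) ^ (β - 1)) • (2 • innerSL ℝ x))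
        + ((‖x‖ ^ 2 : ℝ) ^ β) • (PiLp.proj (𝕜 := ℝ) 2 (fun _ : Fin n => ℝ) i)) x :=
  (PiLp.proj (𝕜 := ℝ) 2 (fun _ : Fin n => ℝ) i).hasFDerivAt.mul (hasFDerivAt_P β hx)

lemma hasFDerivAt_XXP (i k : Fin n) (β : ℝ) {x : EuclideanSpace ℝ (Fin n)} (hx : x ≠ 0) :
    HasFDerivAt (fun y : EuclideanSpace ℝ (Fin n) => y i * y k * (‖y‖ ^ 2 : ℝ) ^ β)
      ((x i * x k) • ((β * (‖x‖ ^ 2 : ℝ) ^ (β - 1)) • (2 • innerSL ℝ x))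
        + ((‖x‖ ^ 2 : ℝ) ^ β) • ((x i) • (PiLp.proj (𝕜 := ℝ) 2 (fun _ : Fin n => ℝ) k)
            + (x k) • (PiLp.proj (𝕜 := ℝ) 2 (fun _ : Fin n => ℝ) i))) x :=
  ((PiLp.proj (𝕜 := ℝ) 2 (fun _ : Fin n => ℝ) i).hasFDerivAt.mul
    (PiLp.proj (𝕜 := ℝ) 2 (fun _ : Fin n => ℝ) k).hasFDerivAt).mul (hasFDerivAt_P β hx)

lemma inner_eval (x : EuclideanSpace ℝ (Fin n)) (j : Fin n) :
    (innerSL ℝ x) (EuclideanSpace.single j 1) = x j := by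
  simp [EuclideanSpace.inner_single_right]

lemma proj_eval (i j : Fin n) :
    (PiLp.proj (𝕜 := ℝ) 2 (fun _ : Fin n => ℝ) i) (EuclideanSpace.single j 1)
      = if j = i then 1 else 0 := by
  simp only [PiLp.proj_apply, EuclideanSpace.single_apply]
  exact if_congr eq_comm rfl rfl

end SDDSaux

open SDDSaux

theorem slowly_decaying_drift_solution (n : ℕ) (hn : 2 ≤ n)
    (ε c : ℝ) (hε0 : 0 < ε) (hε1 : ε < 1)
    (hc : c = ε * ((n : ℝ) - ε) / (1 - ε))
    (u : EuclideanSpace ℝ (Fin n) → ℝ)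
    (hu : ∀ x : EuclideanSpace ℝ (Fin n), u x = x ⟨0, by omega⟩ * ‖x‖ ^ (ε - (n : ℝ))) :
    ContDiffOn ℝ (⊤ : ℕ∞) u {(0 : EuclideanSpace ℝ (Fin n))}ᶜ ∧
    ∀ x : EuclideanSpace ℝ (Fin n), x ≠ 0 →
      -(∑ j, fderiv ℝ (fun y => fderiv ℝ u y (EuclideanSpace.single j 1)) x
          (EuclideanSpace.single j 1))
        + c * (∑ j, fderiv ℝ (fun y : EuclideanSpace ℝ (Fin n) => y j * u y / ‖y‖ ^ 2) x
          (EuclideanSpace.single j 1)) = 0 := by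
  set i0 : Fin n := ⟨0, by omega⟩ with hi0
  set β : ℝ := (ε - n) / 2 with hβ
  have hU : u = fun y : EuclideanSpace ℝ (Fin n) => y i0 * (‖y‖ ^ 2 : ℝ) ^ β := by
    funext y
    rw [hu y]
    congr 1
    rw [← Real.rpow_natCast ‖y‖ 2, ← Real.rpow_mul (norm_nonneg y)]
    rw [hβ]
    congr 1
    ring
  constructor
  · rw [hU]
    intro x hx
    have hx0 : x ≠ 0 := hx
    apply ContDiffAt.contDiffWithinAt
    exact ((PiLp.proj (𝕜 := ℝ) 2 (fun _ : Fin n => ℝ) i0).contDiff.contDiffAt).mul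
      (((contDiff_norm_sq ℝ).contDiffAt).rpow_const_of_ne (qpos hx0).ne')
  · intro x hx
    have hQpos := qpos hx
    -- first derivative formula
    have hF1 : ∀ (j : Fin n) (y : EuclideanSpace ℝ (Fin n)), y ≠ 0 →
        fderiv ℝ u y (EuclideanSpace.single j 1)
          = (if j = i0 then 1 else 0) * (‖y‖ ^ 2 : ℝ) ^ β
            + (2 * β) * (y i0 * y j * (‖y‖ ^ 2 : ℝ) ^ (β - 1)) := by
      intro j y hy
      rw [hU, (hasFDerivAt_XP i0 β hy).fderiv]
      simp only [ContinuousLinearMap.add_apply, ContinuousLinearMap.smul_apply,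
        inner_eval, proj_eval, smul_eq_mul, eq_self_iff_true, if_true]
      ring
    have lap : ∀ j : Fin n,
        fderiv ℝ (fun y => fderiv ℝ u y (EuclideanSpace.single j 1)) x
            (EuclideanSpace.single j 1)
          = (if j = i0 then 1 else 0) * (β * (‖x‖ ^ 2 : ℝ) ^ (β - 1) * (2 * x j))
            + (2 * β) * ((x i0 * x j) * ((β - 1) * (‖x‖ ^ 2 : ℝ) ^ (β - 1 - 1) * (2 * x j))
              + (‖x‖ ^ 2 : ℝ) ^ (β - 1)
                * (x i0 * 1 + x j * (if j = i0 then 1 else 0))) := by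
      intro j
      have hev : (fun y => fderiv ℝ u y (EuclideanSpace.single j 1)) =ᶠ[nhds x]
          (fun y => (if j = i0 then (1:ℝ) else 0) * (‖y‖ ^ 2 : ℝ) ^ β
            + (2 * β) * (y i0 * y j * (‖y‖ ^ 2 : ℝ) ^ (β - 1))) := by
        filter_upwards [IsOpen.mem_nhds isOpen_compl_singleton hx] with y hy
        exact hF1 j y hy
      rw [hev.fderiv_eq]
      have hFj := ((hasFDerivAt_P β hx).const_mul (if j = i0 then (1:ℝ) else 0)).add
        ((hasFDerivAt_XXP i0 j (β - 1) hx).const_mul (2 * β))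
      have hFj2 := hFj.fderiv
      simp only [Pi.add_def] at hFj2
      rw [hFj2]
      simp only [ContinuousLinearMap.add_apply, ContinuousLinearMap.smul_apply,
        inner_eval, proj_eval, smul_eq_mul, eq_self_iff_true, if_true]
      ring
    have drift : ∀ j : Fin n,
        fderiv ℝ (fun y : EuclideanSpace ℝ (Fin n) => y j * u y / ‖y‖ ^ 2) x
            (EuclideanSpace.single j 1)
          = (x j * x i0) * ((β - 1) * (‖x‖ ^ 2 : ℝ) ^ (β - 1 - 1) * (2 * x j))
            + (‖x‖ ^ 2 : ℝ) ^ (β - 1)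
              * (x j * (if j = i0 then 1 else 0) + x i0 * 1) := by
      intro j
      have hev : (fun y : EuclideanSpace ℝ (Fin n) => y j * u y / ‖y‖ ^ 2) =ᶠ[nhds x]
          (fun y => y j * y i0 * (‖y‖ ^ 2 : ℝ) ^ (β - 1)) := by
        filter_upwards [IsOpen.mem_nhds isOpen_compl_singleton hx] with y hy
        have hy0 : y ≠ 0 := hy
        have hq : (‖y‖ ^ 2 : ℝ) ≠ 0 := (qpos hy0).ne'
        rw [hU]
        simp only
        rw [Real.rpow_sub_one hq]
        field_simp
      rw [hev.fderiv_eq, (hasFDerivAt_XXP j i0 (β - 1) hx).fderiv]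
      simp only [ContinuousLinearMap.add_apply, ContinuousLinearMap.smul_apply,
        inner_eval, proj_eval, smul_eq_mul, eq_self_iff_true, if_true]
      ring
    -- sums
    have s1 : ∑ j : Fin n, (if j = i0 then (1:ℝ) else 0) * x j = x i0 := by
      rw [Finset.sum_congr rfl (fun j _ => by rw [ite_mul, zero_mul, one_mul])]
      simp [Finset.sum_ite_eq']
    have s2 : ∑ j : Fin n, x j * x j = ‖x‖ ^ 2 := by
      rw [EuclideanSpace.norm_eq, Real.sq_sqrt (by positivity)]
      exact Finset.sum_congr rfl (fun i _ => by rw [Real.norm_eq_abs, sq_abs, sq])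
    have hQQ : (‖x‖ ^ 2 : ℝ) ^ (β - 1) = (‖x‖ ^ 2 : ℝ) ^ (β - 1 - 1) * ‖x‖ ^ 2 := by
      have h := Real.rpow_sub_one hQpos.ne' (β - 1)
      rw [h, div_mul_cancel₀ _ hQpos.ne']
    have hcε : c * (ε - 1) = ε * (ε - (n : ℝ)) := by
      have h1 : (1 : ℝ) - ε ≠ 0 := by linarith
      rw [hc]
      field_simp
      ring
    rw [Finset.sum_congr rfl (fun j _ => lap j), Finset.sum_congr rfl (fun j _ => drift j)]
    -- linearize summands
    have expand1 : ∀ j : Fin n,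
        (if j = i0 then (1:ℝ) else 0) * (β * (‖x‖ ^ 2 : ℝ) ^ (β - 1) * (2 * x j))
            + (2 * β) * ((x i0 * x j) * ((β - 1) * (‖x‖ ^ 2 : ℝ) ^ (β - 1 - 1) * (2 * x j))
              + (‖x‖ ^ 2 : ℝ) ^ (β - 1) * (x i0 * 1 + x j * (if j = i0 then 1 else 0)))
          = (β * (‖x‖ ^ 2 : ℝ) ^ (β - 1) * 2 + 2 * β * (‖x‖ ^ 2 : ℝ) ^ (β - 1))
              * ((if j = i0 then (1:ℝ) else 0) * x j)
            + (2 * β * (β - 1) * (‖x‖ ^ 2 : ℝ) ^ (β - 1 - 1) * 2 * x i0) * (x j * x j)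
            + 2 * β * (‖x‖ ^ 2 : ℝ) ^ (β - 1) * x i0 := fun j => by ring
    have expand2 : ∀ j : Fin n,
        (x j * x i0) * ((β - 1) * (‖x‖ ^ 2 : ℝ) ^ (β - 1 - 1) * (2 * x j))
            + (‖x‖ ^ 2 : ℝ) ^ (β - 1) * (x j * (if j = i0 then 1 else 0) + x i0 * 1)
          = ((β - 1) * (‖x‖ ^ 2 : ℝ) ^ (β - 1 - 1) * 2 * x i0) * (x j * x j)
            + ((‖x‖ ^ 2 : ℝ) ^ (β - 1)) * ((if j = i0 then (1:ℝ) else 0) * x j)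
            + (‖x‖ ^ 2 : ℝ) ^ (β - 1) * x i0 := fun j => by ring
    rw [Finset.sum_congr rfl (fun j _ => expand1 j),
      Finset.sum_congr rfl (fun j _ => expand2 j)]
    simp only [Finset.sum_add_distrib, ← Finset.mul_sum, s1, s2, Finset.sum_const,
      Finset.card_univ, Fintype.card_fin, nsmul_eq_mul]
    rw [hQQ]
    have h2β : 2 * β = ε - (n : ℝ) := by rw [hβ]; ring
    linear_combination (x i0 * ((‖x‖ ^ 2 : ℝ) ^ (β - 1 - 1) * ‖x‖ ^ 2)) * hcε
      + (x i0 * ((‖x‖ ^ 2 : ℝ) ^ (β - 1 - 1) * ‖x‖ ^ 2))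
        * (c - 2 * β - (ε - (n:ℝ)) - (n:ℝ)) * h2β
end
end
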